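/- arXiv:1505.00508 — 3 statements merged into one kernel-verified Lean document; each statement's English description precedes it below -/
import Mathlib

section
/- There exists a valuation function that rationalises the bidding behaviour — i.e., a function v : {0,1}^n → ℝ such that v(x_t) − p_t·x_t ≥ v(y) − p_t·y for every observation t and every bundle y ∈ {0,1}^n — if and only if the bidding graph G contains no cycle of negative length. -/
open Finset

/-- Euclidean inner product on `ℝⁿ`. -/
def dotp {n : ℕ} (p y : Fin n → ℝ) : ℝ := ∑ i, p i * y i

/-- A bundle is a 0-1 vector. -/
def IsBundle {n : ℕ} (y : Fin n → ℝ) : Prop := ∀ i, y i = 0 ∨ y i = 1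

/-- The cyclically next index in `Fin m`. -/
def cnext {m : ℕ} (i : Fin m) : Fin m := ⟨(i.val + 1) % m, Nat.mod_lt _ i.pos⟩

-- The length of the arc of the bidding graph from bid bundle `x t` to bundle `y`:
-- the minimum of `p s · (y - x t)` over all observations `s` bidding the same bundle as `t`.
open Classical in
noncomputable def arcLen {n T : ℕ} (p x : Fin T → Fin n → ℝ) (t : Fin T)
    (y : Fin n → ℝ) : ℝ :=
  (Finset.univ.filter fun s => x s = x t).inf' ⟨t, by simp⟩
    (fun s => dotp (p s) (y - x t))

/-- `v` is an `ε`-approximate virtual valuation function for the data `(p, x)`. -/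
def IsApproxVV  {n T : ℕ} (p x : Fin T → Fin n → ℝ) (ε : ℝ)
    (v : (Fin n → ℝ) → ℝ) : Prop :=
  ∀ t : Fin T, ∀ y : Fin n → ℝ, IsBundle y →
    v (x t) - dotp (p t) (x t) ≥ v y - dotp (p t) y - ε

/-- `v` is individually rational for the data `(p, x)`. -/
def IndivRational {n T : ℕ} (p x : Fin T → Fin n → ℝ)
    (v : (Fin n → ℝ) → ℝ) : Prop :=
  ∀ t : Fin T, v (x t) ≥ dotp (p t) (x t)

/-- The set of mean lengths of cycles of the bidding graph. -/
noncomputable def meanCycleLens {n T : ℕ} (p x : Fin T → Fin n → ℝ) : Set ℝ :=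
  {r | ∃ m : ℕ, 2 ≤ m ∧ ∃ c : Fin m → Fin T,
      Function.Injective (fun i => x (c i)) ∧
      r = (∑ i : Fin m, arcLen p x (c i) (x (c (cnext i)))) / m}
section Aux

open Finset

variable {n T : ℕ} (p x : Fin T → Fin n → ℝ)

lemma dotp_sub (q y z : Fin n → ℝ) : dotp q (y - z) = dotp q y - dotp q z := by
  simp [dotp, mul_sub, Finset.sum_sub_distrib]

lemma arcLen_le (t : Fin T) (y : Fin n → ℝ) :
    arcLen p x t y ≤ dotp (p t) (y - x t) :=
  Finset.inf'_le _ (by simp)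

lemma le_arcLen {t : Fin T} {y : Fin n → ℝ} {b : ℝ}
    (hb : ∀ s, x s = x t → b ≤ dotp (p s) (y - x t)) : b ≤ arcLen p x t y := by
  apply Finset.le_inf'
  intro s hs
  exact hb s (by simpa using hs)

lemma arcLen_self (t : Fin T) : arcLen p x t (x t) = 0 := by
  have h : (fun s : Fin T => dotp (p s) (x t - x t)) = fun _ => (0 : ℝ) := by
    funext s; simp [dotp]
  rw [arcLen, h]
  exact Finset.inf'_const _ _

lemma arcLen_congr {a b : Fin T} (h : x a = x b) (y : Fin n → ℝ) :
    arcLen p x a y = arcLen p x b y := by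
  simp only [arcLen, h]

/-- Cost of the walk that starts at observation `t`, visits the bundles of the
observations in `L` in order, and finally moves to bundle `y`. -/
noncomputable def wcost : Fin T → List (Fin T) → (Fin n → ℝ) → ℝ
  | t, [], y => arcLen p x t y
  | t, s :: L, y => arcLen p x t (x s) + wcost s L y

lemma wcost_congr {a b : Fin T} (h : x a = x b) (L : List (Fin T)) (y : Fin n → ℝ) :
    wcost p x a L y = wcost p x b L y := by
  cases L with
  | nil => simp [wcost, arcLen_congr p x h]
  | cons s L => simp [wcost, arcLen_congr p x h]

lemma wcost_append (t : Fin T) (L1 : List (Fin T)) (s : Fin T) (L2 : List (Fin T))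
    (y : Fin n → ℝ) :
    wcost p x t (L1 ++ s :: L2) y = wcost p x t L1 (x s) + wcost p x s L2 y := by
  induction L1 generalizing t with
  | nil => simp [wcost]
  | cons a L1 ih => simp [wcost, ih, add_assoc]

/-- The `k`-th node of the walk `t :: L` (with clamping). -/
def nthNode {α : Type*} : α → List α → ℕ → α
  | t, _, 0 => t
  | t, [], _+1 => t
  | _, s :: L, k+1 => nthNode s L k

lemma nthNode_zero {α : Type*} (t : α) (L : List α) : nthNode t L 0 = t := by
  cases L <;> rfl

lemma nthNode_cons_succ {α : Type*} (t s : α) (L : List α) (k : ℕ) :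
    nthNode t (s :: L) (k + 1) = nthNode s L k := rfl

lemma nthNode_eq_getElem {α : Type*} (L : List α) (t : α) (k : ℕ)
    (h : k < (t :: L).length) : nthNode t L k = (t :: L)[k] := by
  induction L generalizing t k with
  | nil =>
    cases k with
    | zero => rfl
    | succ k => simp at h
  | cons s L ih =>
    cases k with
    | zero => rfl
    | succ k =>
      have := ih s k (by simpa using h)
      simpa [nthNode] using this

lemma wcost_eq_sum (t : Fin T) (L : List (Fin T)) (y : Fin n → ℝ) :
    wcost p x t L y =
      ∑ i ∈ Finset.range L.length,
        arcLen p x (nthNode t L i) (x (nthNode t L (i + 1)))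
      + arcLen p x (nthNode t L L.length) y := by
  induction L generalizing t with
  | nil => simp [wcost, nthNode]
  | cons s L ih =>
    rw [show (s :: L).length = L.length + 1 from rfl, Finset.sum_range_succ']
    show arcLen p x t (x s) + wcost p x s L y = _
    rw [ih s]
    simp only [nthNode_cons_succ, nthNode_zero]
    ring

/-- Any list whose image under `f` is not nodup contains two positions with
equal `f`-values. -/
lemma dup_split {α β : Type*} (f : α → β) :
    ∀ l : List α, ¬ (l.map f).Nodup →
      ∃ (l1 : List α) (a : α) (l2 : List α) (b : α) (l3 : List α),
        l = l1 ++ a :: l2 ++ b :: l3 ∧ f a = f b := by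
  intro l
  induction l with
  | nil => intro h; simp at h
  | cons a l ih =>
    intro h
    rw [List.map_cons, List.nodup_cons] at h
    push_neg at h
    by_cases hmem : f a ∈ l.map f
    · obtain ⟨b, hb, hfb⟩ := List.mem_map.1 hmem
      obtain ⟨s, t, rfl⟩ := List.append_of_mem hb
      exact ⟨[], a, s, b, t, by simp, hfb.symm⟩
    · obtain ⟨l1, a', l2, b, l3, rfl, hfab⟩ := ih (fun hn => h hmem hn)
      exact ⟨a :: l1, a', l2, b, l3, by simp, hfab⟩

end Aux
section Aux2

open Finset

variable {n T : ℕ} (p x : Fin T → Fin n → ℝ)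

/-- Every closed walk of the bidding graph has nonnegative length, provided
every (simple) cycle has nonnegative length. -/
lemma claimA
    (H : ∀ m : ℕ, 2 ≤ m → ∀ c : Fin m → Fin T,
      Function.Injective (fun i => x (c i)) →
      0 ≤ ∑ i : Fin m, arcLen p x (c i) (x (c (cnext i)))) :
    ∀ (N : ℕ) (t : Fin T) (L : List (Fin T)), L.length ≤ N →
      0 ≤ wcost p x t L (x t) := by
  intro N
  induction N with
  | zero =>
    intro t L hL
    have : L = [] := List.length_eq_zero_iff.mp (Nat.le_zero.mp hL)
    subst this
    simp [wcost, arcLen_self]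
  | succ N ih =>
    intro t L hL
    by_cases hnd : ((t :: L).map x).Nodup
    · -- the bundles along the walk are pairwise distinct
      cases L with
      | nil => simp [wcost, arcLen_self]
      | cons s L' =>
        set L := s :: L' with hLdef
        have hm2 : 2 ≤ L.length + 1 := by simp [hLdef]
        set m := L.length + 1 with hmdef
        set c : Fin m → Fin T := fun i => nthNode t L i.val with hcdef
        have hinj : Function.Injective (fun i => x (c i)) := by
          intro i j hij
          have hi : (i : ℕ) < (t :: L).length := by
            simpa [hmdef] using i.isLt
          have hj : (j : ℕ) < (t :: L).length := by
            simpa [hmdef] using j.isLt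
          simp only [hcdef, nthNode_eq_getElem _ _ _ hi, nthNode_eq_getElem _ _ _ hj]
            at hij
          have hij' : ((t :: L).map x)[(i : ℕ)]'(by simpa using hi)
              = ((t :: L).map x)[(j : ℕ)]'(by simpa using hj) := by
            rw [List.getElem_map, List.getElem_map]
            exact hij
          exact Fin.ext (hnd.getElem_inj_iff.mp hij')
        have hH := H m hm2 c hinj
        set F : ℕ → ℝ := fun k =>
          arcLen p x (nthNode t L k) (x (nthNode t L ((k + 1) % m))) with hFdef
        have h1 : (∑ i : Fin m, arcLen p x (c i) (x (c (cnext i))))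
            = ∑ k ∈ Finset.range m, F k := Fin.sum_univ_eq_sum_range F m
        have h2 : ∑ k ∈ Finset.range m, F k = wcost p x t L (x t) := by
          rw [hmdef, Finset.sum_range_succ]
          have hlast : F L.length = arcLen p x (nthNode t L L.length) (x t) := by
            simp [hFdef, hmdef, Nat.mod_self, nthNode_zero]
          have hsml : ∑ k ∈ Finset.range L.length, F k
              = ∑ k ∈ Finset.range L.length,
                  arcLen p x (nthNode t L k) (x (nthNode t L (k + 1))) := by
            apply Finset.sum_congr rfl
            intro k hk
            have hk' : k < L.length := Finset.mem_range.mp hk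
            simp [hFdef, Nat.mod_eq_of_lt (show k + 1 < m by omega)]
          rw [hlast, hsml, wcost_eq_sum]
        rw [h1, h2] at hH
        exact hH
    · -- two nodes of the walk carry the same bundle: split off a subcycle
      obtain ⟨l1, a, l2, b, l3, heq, hab⟩ := dup_split x (t :: L) hnd
      cases l1 with
      | nil =>
        rw [List.nil_append] at heq
        injection heq with hta hLeq
        subst hta
        subst hLeq
        simp only [List.append_eq] at hL hnd ⊢
        rw [wcost_append]
        simp only [List.length_append, List.length_cons] at hL
        have e1 : wcost p x t l2 (x b) = wcost p x t l2 (x t) := by rw [hab]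
        have e2 : wcost p x b l3 (x t) = wcost p x b l3 (x b) := by rw [hab]
        have g1 : 0 ≤ wcost p x t l2 (x t) := ih t l2 (by omega)
        have g2 : 0 ≤ wcost p x b l3 (x b) := ih b l3 (by omega)
        rw [e1, e2]
        linarith
      | cons t' l1' =>
        rw [List.cons_append] at heq
        injection heq with htt hLeq
        subst htt
        subst hLeq
        simp only [List.append_eq] at hL hnd ⊢
        simp only [List.length_append, List.length_cons] at hL
        rw [wcost_append, wcost_append]
        have g2 : 0 ≤ wcost p x a l2 (x b) := by
          rw [← hab]
          exact ih a l2 (by omega)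
        have e3 : wcost p x b l3 (x t) = wcost p x a l3 (x t) :=
          (wcost_congr p x hab l3 (x t)).symm
        have g1 : 0 ≤ wcost p x t l1' (x a) + wcost p x a l3 (x t) := by
          rw [← wcost_append]
          exact ih t (l1' ++ a :: l3) (by
            simp only [List.length_append, List.length_cons]; omega)
        rw [e3]
        linarith

end Aux2
section Aux3

open Finset

variable {n T : ℕ} (p x : Fin T → Fin n → ℝ)

/-- A walk with more than `T + 1` nodes can be strictly shortened without
increasing its cost, assuming all closed walks have nonnegative cost. -/
lemma shorten
    (hA : ∀ (t : Fin T) (L : List (Fin T)), 0 ≤ wcost p x t L (x t))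
    (t : Fin T) (L : List (Fin T)) (y : Fin n → ℝ) (hL : T ≤ L.length) :
    ∃ L' : List (Fin T), L'.length < L.length ∧ wcost p x t L' y ≤ wcost p x t L y := by
  have hcard : ¬ (t :: L).Nodup := by
    intro hnd
    have := hnd.length_le_card
    simp [Fintype.card_fin] at this
    omega
  have hnd' : ¬ ((t :: L).map id).Nodup := by simpa using hcard
  obtain ⟨l1, a, l2, b, l3, heq, hab⟩ := dup_split id (t :: L) hnd'
  simp only [id_eq] at hab
  subst hab
  cases l1 with
  | nil =>
    rw [List.nil_append] at heq
    injection heq with hta hLeq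
    subst hta
    subst hLeq
    simp only [List.append_eq] at *
    refine ⟨l3, by simp; omega, ?_⟩
    rw [wcost_append]
    have h0 : 0 ≤ wcost p x t l2 (x t) := hA t l2
    linarith
  | cons t' l1' =>
    rw [List.cons_append] at heq
    injection heq with htt hLeq
    subst htt
    subst hLeq
    simp only [List.append_eq] at *
    refine ⟨l1' ++ a :: l3, by simp, ?_⟩
    rw [wcost_append, wcost_append, wcost_append]
    have h0 : 0 ≤ wcost p x a l2 (x a) := hA a l2
    linarith
end Aux3
section Aux4

open Finset

variable {n T : ℕ} (p x : Fin T → Fin n → ℝ)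

lemma shrinkTo
    (hA : ∀ (t : Fin T) (L : List (Fin T)), 0 ≤ wcost p x t L (x t)) :
    ∀ (N : ℕ) (t : Fin T) (L : List (Fin T)) (y : Fin n → ℝ), L.length ≤ N →
      ∃ L' : List (Fin T), L'.length ≤ T ∧ wcost p x t L' y ≤ wcost p x t L y := by
  intro N
  induction N with
  | zero =>
    intro t L y hL
    exact ⟨L, by omega, le_refl _⟩
  | succ N ih =>
    intro t L y hL
    by_cases h : L.length ≤ T
    · exact ⟨L, h, le_refl _⟩
    · obtain ⟨L'', hlen, hle⟩ := shorten p x hA t L y (by omega)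
      obtain ⟨L', hL', hle'⟩ := ih t L'' y (by omega)
      exact ⟨L', hL', le_trans hle' hle⟩

lemma wcost_pad (t : Fin T) (L : List (Fin T)) (y : Fin n → ℝ) (k : ℕ) :
    wcost p x t (List.replicate k t ++ L) y = wcost p x t L y := by
  induction k with
  | zero => simp
  | succ k ih =>
    rw [List.replicate_succ, List.cons_append]
    show arcLen p x t (x t) + wcost p x t (List.replicate k t ++ L) y = _
    rw [arcLen_self, ih, zero_add]

/-- The tail of a walk encoded as a function `Fin (T+1) → Fin T`. -/
def tailList (u : Fin (T + 1) → Fin T) : List (Fin T) :=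
  List.ofFn fun i : Fin T => u i.succ

lemma tailList_length (u : Fin (T + 1) → Fin T) : (tailList u).length = T := by
  simp [tailList]

/-- Every walk of the bidding graph is dominated in cost by a walk with exactly
`T + 1` nodes. -/
lemma toFixed
    (hA : ∀ (t : Fin T) (L : List (Fin T)), 0 ≤ wcost p x t L (x t))
    (t : Fin T) (L : List (Fin T)) (y : Fin n → ℝ) :
    ∃ u : Fin (T + 1) → Fin T,
      wcost p x (u 0) (tailList u) y ≤ wcost p x t L y := by
  obtain ⟨L', hL', hle⟩ := shrinkTo p x hA L.length t L y (le_refl _)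
  set M : List (Fin T) := List.replicate (T - L'.length) t ++ L' with hM
  have hMlen : M.length = T := by simp [hM]; omega
  have hMcost : wcost p x t M y = wcost p x t L' y := wcost_pad p x t L' y _
  refine ⟨fun i => nthNode t M i.val, ?_⟩
  have hu0 : nthNode t M (0 : Fin (T + 1)).val = t := nthNode_zero t M
  have htail : tailList (fun i : Fin (T + 1) => nthNode t M i.val) = M := by
    apply List.ext_getElem
    · simp [tailList, hMlen]
    · intro i h1 h2
      simp only [tailList, List.getElem_ofFn]
      rw [nthNode_eq_getElem _ _ _ (by simp; omega)]
      simp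
  show wcost p x (nthNode t M (0 : Fin (T + 1)).val)
      (tailList fun i : Fin (T + 1) => nthNode t M i.val) y ≤ _
  rw [hu0, htail, hMcost]
  exact hle

end Aux4

/-- A valuation function rationalising the bidding behaviour exists
if and only if the bidding graph has no cycle of negative length. -/
theorem rationalizable_iff_no_negative_cycle {n T : ℕ}
    (p x : Fin T → Fin n → ℝ)
    (hp : ∀ t i, 0 ≤ p t i) (hx : ∀ t, IsBundle (x t)) :
    (∃ v : (Fin n → ℝ) → ℝ, ∀ t : Fin T, ∀ y : Fin n → ℝ, IsBundle y →
        v (x t) - dotp (p t) (x t) ≥ v y - dotp (p t) y)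
    ↔
    (∀ m : ℕ, 2 ≤ m → ∀ c : Fin m → Fin T,
      Function.Injective (fun i => x (c i)) →
      0 ≤ ∑ i : Fin m, arcLen p x (c i) (x (c (cnext i)))) := by
  constructor
  · rintro ⟨v, hv⟩ m hm c hc
    haveI : NeZero m := ⟨by omega⟩
    have hcn : ∀ i : Fin m, cnext i = i + 1 := by
      intro i
      apply Fin.ext
      simp [cnext, Fin.add_def, Fin.val_one',
        Nat.mod_eq_of_lt (show 1 < m by omega)]
    have key : ∀ i : Fin m,
        v (x (c (cnext i))) - v (x (c i)) ≤ arcLen p x (c i) (x (c (cnext i))) := by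
      intro i
      apply le_arcLen
      intro s hs
      rw [dotp_sub, ← hs]
      have h := hv s (x (c (cnext i))) (hx _)
      linarith
    have h0 : ∑ i : Fin m, (v (x (c (cnext i))) - v (x (c i))) = 0 := by
      rw [Finset.sum_sub_distrib]
      have he : ∑ i : Fin m, v (x (c (cnext i))) = ∑ i : Fin m, v (x (c i)) := by
        simp_rw [hcn]
        exact Equiv.sum_comp (Equiv.addRight (1 : Fin m)) (fun j => v (x (c j)))
      rw [he, sub_self]
    calc (0:ℝ) = ∑ i : Fin m, (v (x (c (cnext i))) - v (x (c i))) := h0.symm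
      _ ≤ ∑ i : Fin m, arcLen p x (c i) (x (c (cnext i))) :=
          Finset.sum_le_sum fun i _ => key i
  · intro H
    rcases Nat.eq_zero_or_pos T with hT | hT
    · subst hT
      exact ⟨fun _ => 0, fun t => t.elim0⟩
    · have hA : ∀ (t : Fin T) (L : List (Fin T)), 0 ≤ wcost p x t L (x t) :=
        fun t L => claimA p x H L.length t L (le_refl _)
      have hne : (Finset.univ : Finset (Fin (T + 1) → Fin T)).Nonempty :=
        ⟨fun _ => ⟨0, hT⟩, Finset.mem_univ _⟩
      refine ⟨fun y => Finset.univ.inf' hne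
        (fun u : Fin (T + 1) → Fin T => wcost p x (u 0) (tailList u) y),
        fun t y hy => ?_⟩
    
      show Finset.univ.inf' hne
          (fun u : Fin (T + 1) → Fin T => wcost p x (u 0) (tailList u) (x t))
          - dotp (p t) (x t)
        ≥ Finset.univ.inf' hne
          (fun u : Fin (T + 1) → Fin T => wcost p x (u 0) (tailList u) y)
          - dotp (p t) y
      obtain ⟨u₀, -, hu₀⟩ := Finset.exists_mem_eq_inf' hne
        (fun u : Fin (T + 1) → Fin T => wcost p x (u 0) (tailList u) (x t))
      have happ : wcost p x (u₀ 0) (tailList u₀ ++ [t]) y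
          = wcost p x (u₀ 0) (tailList u₀) (x t) + arcLen p x t y := by
        rw [wcost_append]
        rfl
      obtain ⟨u, hu⟩ := toFixed p x hA (u₀ 0) (tailList u₀ ++ [t]) y
      have h1 : Finset.univ.inf' hne
          (fun u : Fin (T + 1) → Fin T => wcost p x (u 0) (tailList u) y)
          ≤ wcost p x (u 0) (tailList u) y :=
        Finset.inf'_le _ (Finset.mem_univ u)
      have hchain : Finset.univ.inf' hne
          (fun u : Fin (T + 1) → Fin T => wcost p x (u 0) (tailList u) y)
          ≤ Finset.univ.inf' hne
            (fun u : Fin (T + 1) → Fin T => wcost p x (u 0) (tailList u) (x t))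
            + arcLen p x t y := by
        rw [hu₀, ← happ]
        exact le_trans h1 hu
      have h2 : arcLen p x t y ≤ dotp (p t) (y - x t) := arcLen_le p x t y
      rw [dotp_sub] at h2
      linarith
end

section
/- Let ε ≥ 0 and suppose there are at least two distinct bid bundles. The set of price-bid pairings {(p_t, x_t) : 1 ≤ t ≤ T} admits an individually rational ε-approximate virtual valuation function if and only if it satisfies the relaxed GARP-based bidding rule, i.e., for every k ≥ 1 and every sequence of observation indices t_0, t_1, …, t_k whose bid bundles are pairwise distinct, (p_{t_k} − p_{t_0})·x_{t_0} ≥ Σ_{i=1}^{k} (p_{t_i} − p_{t_{i−1}})·x_{t_i} − (k+1)·ε. -/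
open Finset

/-!
An `ε`-approximate virtual valuation `v` is a potential for the bidding graph in which the arc
from observation `s` to a bundle `y` has length `p s · (y - x s) + ε`: the defining inequality at
`y = x t` reads `v (x t) - v (x s) ≤ p s · (x t - x s) + ε`. Summing it around a cycle of
observations whose bundles close up shows that every such cycle has nonnegative length, and by
summation by parts this is the relaxed GARP rule.

Conversely, if every cycle with pairwise distinct bundles has nonnegative length, the shortest
length `φ t` of a path with pairwise distinct bundles ending at `t` is a potential: extending a
path to `s` by the arc to `t` either yields such a path to `t`, or revisits the bundle of `t`, and
then cutting off the nonnegative cycle from that visit onwards yields one. The lower envelope of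
the affine functions `y ↦ φ s + C + p s · (y - x s) + ε` is then an `ε`-approximate virtual
valuation, individually rational once the constant `C` is large.
-/

open Function

section Potential

variable {V β : Type*} (key : V → β) (len : V → β → ℝ)

/-- The walk `c 0, …, c m` (later values of `c` are irrelevant), where the arc from `a` to `b`
has length `len a (key b)`. -/
def walkLen (c : ℕ → V) (m : ℕ) : ℝ :=
  ∑ l ∈ range m, len (c l) (key (c (l + 1)))

def keyPaths (t : V) : Set ((ℕ → V) × ℕ) :=
  {cm | Set.InjOn (key ∘ cm.1) (Set.Iic cm.2) ∧ cm.1 cm.2 = t}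

def CycleNonneg : Prop :=
  ∀ (c : ℕ → V) (m : ℕ), Set.InjOn (key ∘ c) (Set.Iio m) → key (c m) = key (c 0) →
    0 ≤ walkLen key len c m

variable {key len}

lemma walkLen_congr {c c' : ℕ → V} {m : ℕ} (h : ∀ l < m, c l = c' l)
    (hkey : ∀ l ≤ m, key (c l) = key (c' l)) :
    walkLen key len c m = walkLen key len c' m :=
  Finset.sum_congr rfl fun l hl => by
    rw [Finset.mem_range] at hl
    rw [h l hl, hkey (l + 1) hl]

lemma walkLen_add (c : ℕ → V) (i r : ℕ) :
    walkLen key len c (i + r) = walkLen key len c i + walkLen key len (fun l => c (i + l)) r :=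
  Finset.sum_range_add _ i r

lemma eqOn_update_succ (c : ℕ → V) (m : ℕ) (b : V) :
    Set.EqOn (update c (m + 1) b) c (Set.Iic m) :=
  fun _ hl => update_of_ne (Nat.lt_succ_of_le hl).ne b c

lemma walkLen_update_succ (c : ℕ → V) (m : ℕ) (b : V) :
    walkLen key len (update c (m + 1) b) (m + 1) = walkLen key len c m + len (c m) (key b) := by
  have hc := eqOn_update_succ c m b
  rw [walkLen, Finset.sum_range_succ, update_self, hc (Set.mem_Iic.mpr le_rfl)]
  congr 1
  exact walkLen_congr (fun l hl => hc hl.le) fun l hl => by rw [hc hl]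

lemma sub_le_walkLen (f : β → ℝ) (h : ∀ a b, f (key b) - f (key a) ≤ len a (key b))
    (c : ℕ → V) (m : ℕ) : f (key (c m)) - f (key (c 0)) ≤ walkLen key len c m := by
  rw [← Finset.sum_range_sub fun l => f (key (c l))]
  exact Finset.sum_le_sum fun l _ => h _ _

lemma mem_keyPaths_update_succ {c : ℕ → V} {m : ℕ} {a b : V} (hc : (c, m) ∈ keyPaths key a)
    (hb : ∀ i ≤ m, key (c i) ≠ key b) : (update c (m + 1) b, m + 1) ∈ keyPaths key b := by
  have hd := eqOn_update_succ c m b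
  refine ⟨?_, update_self _ b c⟩
  rw [show Set.Iic (m + 1) = insert (m + 1) (Set.Iic m) from Order.Iic_succ m,
    Set.injOn_insert (by simp)]
  refine ⟨hc.1.congr hd.comp_left.symm, ?_⟩
  rintro ⟨i, hi, h⟩
  simp only [comp_apply, hd hi, update_self] at h
  exact hb i hi h

lemma comp_update_of_eq {c : ℕ → V} {i : ℕ} {b : V} (hb : key (c i) = key b) :
    key ∘ update c i b = key ∘ c := by
  rw [comp_update, update_eq_self_iff]
  exact hb.symm

lemma mem_keyPaths_update {c : ℕ → V} {m i : ℕ} {a b : V} (hc : (c, m) ∈ keyPaths key a)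
    (hi : i ≤ m) (hb : key (c i) = key b) : (update c i b, i) ∈ keyPaths key b :=
  ⟨comp_update_of_eq hb ▸ hc.1.mono (Set.Iic_subset_Iic.mpr hi), update_self i b c⟩

lemma neg_le_walkLen_of_mem_keyPaths (hcycle : CycleNonneg key len) {c : ℕ → V} {m : ℕ} {t : V}
    (hc : (c, m) ∈ keyPaths key t) : -len t (key (c 0)) ≤ walkLen key len c m := by
  obtain ⟨hinj, rfl⟩ := hc
  have hd := eqOn_update_succ c m (c 0)
  have h := hcycle (update c (m + 1) (c 0)) (m + 1)
    (by rw [Set.Iio_add_one_eq_Iic]; exact hinj.congr hd.comp_left.symm) (by simp)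
  rw [walkLen_update_succ] at h
  linarith

lemma exists_mem_keyPaths_walkLen_le (hcycle : CycleNonneg key len) {c : ℕ → V} {m : ℕ} {a : V}
    (hc : (c, m) ∈ keyPaths key a) (b : V) : ∃ cm ∈ keyPaths key b,
      walkLen key len cm.1 cm.2 ≤ walkLen key len c m + len a (key b) := by
  obtain rfl : c m = a := hc.2
  have hlen := walkLen_update_succ (key := key) (len := len) c m b
  by_cases hrep : ∃ i ≤ m, key (c i) = key b
  · obtain ⟨i, him, hi⟩ := hrep
    have hd := eqOn_update_succ c m b
    set d := update c (m + 1) b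
    have hcyc : 0 ≤ walkLen key len (fun l => d (i + l)) (m + 1 - i) := by
      refine hcycle _ _ (fun l hl l' hl' h => ?_) ?_
      · rw [Set.mem_Iio] at hl hl'
        have hl₀ : i + l ∈ Set.Iic m := Set.mem_Iic.mpr (by omega)
        have hl₀' : i + l' ∈ Set.Iic m := Set.mem_Iic.mpr (by omega)
        simp only [comp_apply, hd hl₀, hd hl₀'] at h
        have := hc.1 hl₀ hl₀' h
        omega
      · simp [d, Nat.add_sub_cancel' (by omega : i ≤ m + 1), hd (Set.mem_Iic.mpr him), hi]
    have hsplit := walkLen_add (key := key) (len := len) d i (m + 1 - i)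
    rw [Nat.add_sub_cancel' (by omega)] at hsplit
    have hpre : walkLen key len (update c i b) i = walkLen key len d i :=
      walkLen_congr (fun l hl => by rw [update_of_ne hl.ne, hd (Set.mem_Iic.mpr (by omega))])
        fun l hl => (congrFun (comp_update_of_eq hi) l).trans
          (congrArg key (hd (Set.mem_Iic.mpr (by omega))).symm)
    exact ⟨_, mem_keyPaths_update hc him hi, by dsimp only; linarith⟩
  · push Not at hrep
    exact ⟨_, mem_keyPaths_update_succ hc hrep, hlen.le⟩

theorem exists_potential_of_cycleNonneg [Finite V] (hcycle : CycleNonneg key len) :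
    ∃ φ : V → ℝ, ∀ a b, φ b ≤ φ a + len a (key b) := by
  have hne : ∀ t, Nonempty (keyPaths key t) := fun t =>
    ⟨⟨(fun _ => t, 0), fun i hi j hj _ => by simp_all, rfl⟩⟩
  have hbdd : ∀ t, BddBelow (Set.range fun cm : keyPaths key t => walkLen key len cm.1.1 cm.1.2) :=
    fun t => ⟨-⨆ u, len t (key u), by
      rintro _ ⟨⟨⟨c, m⟩, hc⟩, rfl⟩
      have := le_ciSup (Finite.bddAbove_range fun u => len t (key u)) (c 0)
      linarith [neg_le_walkLen_of_mem_keyPaths hcycle hc]⟩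
  refine ⟨fun t => ⨅ cm : keyPaths key t, walkLen key len cm.1.1 cm.1.2, fun a b => ?_⟩
  have := hne a
  rw [← sub_le_iff_le_add]
  refine le_ciInf fun ⟨⟨c, m⟩, hc⟩ => ?_
  obtain ⟨cm, hcm, hle⟩ := exists_mem_keyPaths_walkLen_le hcycle hc b
  have := ciInf_le (hbdd b) ⟨cm, hcm⟩
  dsimp only at this ⊢
  linarith

end Potential

section Bidding

open Fin.NatCast

variable {n T : ℕ} (p x : Fin T → Fin n → ℝ) (ε : ℝ)

lemma dotp_eq_dotProduct (a y : Fin n → ℝ) : dotp a y = a ⬝ᵥ y := rfl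

def arcWeight (s : Fin T) (y : Fin n → ℝ) : ℝ := dotp (p s) (y - x s) + ε

def RelaxedGARP : Prop :=
  ∀ k : ℕ, 1 ≤ k → ∀ t : Fin (k + 1) → Fin T,
    Injective (fun i => x (t i)) →
    dotp (p (t (Fin.last k)) - p (t 0)) (x (t 0)) ≥
      (∑ i : Fin k, dotp (p (t i.succ) - p (t i.castSucc)) (x (t i.succ)))
        - (k + 1) * ε

lemma walkLen_arcWeight_cyclic {k : ℕ} (t : Fin (k + 1) → Fin T) :
    walkLen x (arcWeight p x ε) (fun l : ℕ => t l) (k + 1) =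
      dotp (p (t (Fin.last k)) - p (t 0)) (x (t 0)) -
        ∑ i : Fin k, dotp (p (t i.succ) - p (t i.castSucc)) (x (t i.succ)) + (k + 1) * ε := by
  have hcyc : walkLen x (arcWeight p x ε) (fun l : ℕ => t l) (k + 1) =
      ∑ i : Fin (k + 1), (p (t i) ⬝ᵥ x (t (i + 1)) - p (t i) ⬝ᵥ x (t i) + ε) := by
    rw [walkLen, ← Fin.sum_univ_eq_sum_range]
    refine Finset.sum_congr rfl fun i _ => ?_
    simp [arcWeight, dotp_eq_dotProduct, dotProduct_sub]
  have hnext : ∑ i : Fin (k + 1), p (t i) ⬝ᵥ x (t (i + 1)) =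
      ∑ i : Fin k, p (t i.castSucc) ⬝ᵥ x (t i.succ) + p (t (Fin.last k)) ⬝ᵥ x (t 0) := by
    rw [Fin.sum_univ_castSucc]
    simp only [Fin.coeSucc_eq_succ, Fin.last_add_one]
  have hdiag_castSucc := Fin.sum_univ_castSucc fun i => p (t i) ⬝ᵥ x (t i)
  have hdiag_succ := Fin.sum_univ_succ fun i => p (t i) ⬝ᵥ x (t i)
  rw [hcyc, Finset.sum_add_distrib, Finset.sum_sub_distrib, hnext]
  simp only [dotp_eq_dotProduct, sub_dotProduct, Finset.sum_sub_distrib, Finset.sum_const,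
    Finset.card_univ, Fintype.card_fin, nsmul_eq_mul]
  push_cast
  linarith

lemma relaxedGARP_of_walkLen_nonneg
    (h : ∀ c m, x (c m) = x (c 0) → 0 ≤ walkLen x (arcWeight p x ε) c m) :
    RelaxedGARP p x ε := by
  intro k _ t _
  have := h (fun l : ℕ => t l) (k + 1) (by simp)
  rw [walkLen_arcWeight_cyclic] at this
  linarith

lemma cycleNonneg_of_relaxedGARP (hε : 0 ≤ ε) (h : RelaxedGARP p x ε) :
    CycleNonneg x (arcWeight p x ε) := by
  intro c m hinj hclosed
  rcases m with _ | _ | k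
  · simp [walkLen]
  · simpa [walkLen, arcWeight, hclosed, dotp] using hε
  · set t : Fin (k + 2) → Fin T := fun i => c i
    have ht : Injective fun i => x (t i) := fun i j hij => Fin.ext (hinj i.isLt j.isLt hij)
    have hgarp := h (k + 1) (by omega) t ht
    have hct : walkLen x (arcWeight p x ε) c (k + 2) =
        walkLen x (arcWeight p x ε) (fun l : ℕ => t l) (k + 2) :=
      walkLen_congr (fun l hl => by simp [t, Nat.mod_eq_of_lt hl]) fun l hl => by
        rcases hl.lt_or_eq with hl | rfl
        · simp [t, Nat.mod_eq_of_lt hl]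
        · simp [t, hclosed]
    rw [hct, walkLen_arcWeight_cyclic]
    push_cast at hgarp ⊢
    linarith

lemma walkLen_nonneg_of_isApproxVV (hx : ∀ t, IsBundle (x t)) {v : (Fin n → ℝ) → ℝ}
    (hv : IsApproxVV p x ε v) (c : ℕ → Fin T) (m : ℕ) (hclosed : x (c m) = x (c 0)) :
    0 ≤ walkLen x (arcWeight p x ε) c m := by
  have h := sub_le_walkLen (key := x) (len := arcWeight p x ε) v (fun a b => ?_) c m
  · rwa [hclosed, sub_self] at h
  · have := hv a (x b) (hx b)
    simp only [arcWeight, dotp_eq_dotProduct, dotProduct_sub] at this ⊢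
    linarith

lemma exists_valuation_of_potential {φ : Fin T → ℝ}
    (hφ : ∀ s t, φ t ≤ φ s + arcWeight p x ε s (x t)) :
    ∃ v, IsApproxVV p x ε v ∧ IndivRational p x v := by
  set C := ⨆ u, (dotp (p u) (x u) - φ u)
  set v : (Fin n → ℝ) → ℝ := fun y => ⨅ u, (φ u + C + arcWeight p x ε u y)
  have hv_le : ∀ t y, v y ≤ φ t + C + arcWeight p x ε t y := fun t y =>
    ciInf_le (Finite.bddBelow_range _) t
  have hv_ge : ∀ t, φ t + C ≤ v (x t) := fun t =>
    have : Nonempty (Fin T) := ⟨t⟩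
    le_ciInf fun u => by linarith [hφ u t]
  have hC : ∀ t, dotp (p t) (x t) ≤ φ t + C := fun t => by
    linarith [le_ciSup (Finite.bddAbove_range fun u => dotp (p u) (x u) - φ u) t]
  refine ⟨v, fun t y _ => ?_, fun t => (hC t).trans (hv_ge t)⟩
  have hle := hv_le t y
  have hge := hv_ge t
  simp only [arcWeight, dotp_eq_dotProduct, dotProduct_sub] at hle hge ⊢
  linarith

end Bidding

theorem indivRational_approxVV_iff_relaxed_garp_general {n T : ℕ}
    (p x : Fin T → Fin n → ℝ)
    (hx : ∀ t, IsBundle (x t))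
    (ε : ℝ) (hε : 0 ≤ ε) :
    (∃ v : (Fin n → ℝ) → ℝ, IsApproxVV p x ε v ∧ IndivRational p x v)
    ↔
    (∀ k : ℕ, 1 ≤ k → ∀ t : Fin (k + 1) → Fin T,
      Function.Injective (fun i => x (t i)) →
      dotp (p (t (Fin.last k)) - p (t 0)) (x (t 0)) ≥
        (∑ i : Fin k, dotp (p (t i.succ) - p (t i.castSucc)) (x (t i.succ)))
          - (k + 1) * ε) := by
  constructor
  · rintro ⟨v, hv, -⟩
    exact relaxedGARP_of_walkLen_nonneg p x ε (walkLen_nonneg_of_isApproxVV p x ε hx hv)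
  · intro h
    obtain ⟨φ, hφ⟩ := exists_potential_of_cycleNonneg (cycleNonneg_of_relaxedGARP p x ε hε h)
    exact exists_valuation_of_potential p x ε hφ

/-- There exists an individually rational `ε`-approximate virtual valuation
function if and only if the relaxed GARP-based bidding rule is satisfied. -/
theorem indivRational_approxVV_iff_relaxed_garp {n T : ℕ}
    (p x : Fin T → Fin n → ℝ)
    (hp : ∀ t i, 0 ≤ p t i) (hx : ∀ t, IsBundle (x t))
    (hdist : ∃ s t : Fin T, x s ≠ x t)
    (ε : ℝ) (hε : 0 ≤ ε) :
    (∃ v : (Fin n → ℝ) → ℝ, IsApproxVV p x ε v ∧ IndivRational p x v)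
    ↔
    (∀ k : ℕ, 1 ≤ k → ∀ t : Fin (k + 1) → Fin T,
      Function.Injective (fun i => x (t i)) →
      dotp (p (t (Fin.last k)) - p (t 0)) (x (t 0)) ≥
        (∑ i : Fin k, dotp (p (t i.succ) - p (t i.castSucc)) (x (t i.succ)))
          - (k + 1) * ε) :=
  indivRational_approxVV_iff_relaxed_garp_general p x hx ε hε
end

section
/- Let G be a complete directed graph on a finite vertex set with arc lengths ℓ, let k ≥ 1 be an integer, and set ℓ^max = max over arcs e of |ℓ_e|. If every cycle of cardinality at most k+1 has nonnegative length, then every cycle in G has mean length at least −ℓ^max/k. -/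
open Finset

/-! For `m > k + 1`, slide a window of `k + 1` consecutive vertices around the cycle. Each window,
closed by the chord from its last vertex back to its first, is a cycle of cardinality `k + 1`,
hence of nonnegative length. Summing over the `m` windows counts every arc of the cycle exactly
`k` times and adds `m` chords of length at most `ℓmax`, so `k · length + m · ℓmax ≥ 0`. -/

section Cycles

open Fin.NatCast

variable {V M : Type*} [AddCommMonoid M]

def cycleLength (ℓ : V → V → M) {m : ℕ} (c : Fin m → V) : M :=
  ∑ i : Fin m, ℓ (c i) (c (cnext i))

/-- The `n` consecutive vertices `c i, …, c (i + (n - 1))` of `c`, read as a cycle closed by the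
chord from `c (i + (n - 1))` back to `c i`. -/
def cycleWindow {m : ℕ} [NeZero m] (c : Fin m → V) (i : Fin m) (n : ℕ) : Fin n → V :=
  fun j => c (i + ((j : ℕ) : Fin m))

lemma cnext_eq_add_one {m : ℕ} [NeZero m] (i : Fin m) : cnext i = i + 1 := by
  ext
  simp [cnext, Fin.val_add]

lemma cnext_castSucc {k : ℕ} (j : Fin k) : cnext j.castSucc = j.succ := by
  ext
  simp [cnext, Nat.mod_eq_of_lt (Nat.succ_lt_succ j.isLt)]

lemma cnext_last (k : ℕ) : cnext (Fin.last k) = 0 := by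
  ext
  simp [cnext]

lemma natCast_injective_of_le {m n : ℕ} [NeZero m] (hnm : n ≤ m) :
    Function.Injective (fun j : Fin n => ((j : ℕ) : Fin m)) := fun j₁ j₂ h =>
  Fin.ext <| by
    simpa [Fin.val_cast_of_lt (j₁.isLt.trans_le hnm), Fin.val_cast_of_lt (j₂.isLt.trans_le hnm)]
      using congrArg Fin.val h

variable {m : ℕ} [NeZero m]

lemma cycleWindow_injective {c : Fin m → V} (hc : Function.Injective c) (i : Fin m) {n : ℕ}
    (hnm : n ≤ m) : Function.Injective (cycleWindow c i n) :=
  hc.comp <| (add_right_injective i).comp (natCast_injective_of_le hnm)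

lemma cycleLength_cycleWindow (ℓ : V → V → M) (c : Fin m → V) (i : Fin m) (k : ℕ) :
    cycleLength ℓ (cycleWindow c i (k + 1)) =
      ∑ j : Fin k, ℓ (c (i + j)) (c (i + j + 1)) + ℓ (c (i + k)) (c i) := by
  simp [cycleLength, cycleWindow, Fin.sum_univ_castSucc, cnext_castSucc, cnext_last, add_assoc]

lemma sum_arc_add_right (ℓ : V → V → M) (c : Fin m → V) (a : Fin m) :
    ∑ i, ℓ (c (i + a)) (c (i + a + 1)) = cycleLength ℓ c := by
  simp only [cycleLength, cnext_eq_add_one]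
  exact Fintype.sum_equiv (Equiv.addRight a) _ _ fun i => by simp

lemma sum_cycleLength_cycleWindow (ℓ : V → V → M) (c : Fin m → V) (k : ℕ) :
    ∑ i, cycleLength ℓ (cycleWindow c i (k + 1)) =
      k • cycleLength ℓ c + ∑ i, ℓ (c (i + k)) (c i) := by
  simp only [cycleLength_cycleWindow, Finset.sum_add_distrib]
  rw [Finset.sum_comm]
  simp [sum_arc_add_right]

lemma sum_chord_le {ℓ : V → V → ℝ} {L : ℝ} (hL : ∀ a b, a ≠ b → ℓ a b ≤ L)
    {c : Fin m → V} (hc : Function.Injective c) {k : ℕ} (hk : 1 ≤ k) (hkm : k < m) :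
    ∑ i, ℓ (c (i + k)) (c i) ≤ m * L := by
  have hk_ne : ((k : ℕ) : Fin m) ≠ 0 := fun h => by
    have := congrArg Fin.val h
    rw [Fin.val_cast_of_lt hkm] at this
    simp only [Fin.val_zero] at this
    omega
  calc ∑ i, ℓ (c (i + k)) (c i) ≤ ∑ _i : Fin m, L :=
        Finset.sum_le_sum fun i _ => hL _ _ fun h => hk_ne (add_eq_left.mp (hc h))
    _ = m * L := by simp

lemma neg_mul_le_mul_cycleLength {ℓ : V → V → ℝ} {L : ℝ} (hL : ∀ a b, a ≠ b → ℓ a b ≤ L)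
    {c : Fin m → V} (hc : Function.Injective c) {k : ℕ} (hk : 1 ≤ k) (hkm : k < m)
    (hwindow : ∀ i, 0 ≤ cycleLength ℓ (cycleWindow c i (k + 1))) :
    -(m * L) ≤ k * cycleLength ℓ c := by
  have hsum := sum_cycleLength_cycleWindow ℓ c k
  rw [nsmul_eq_mul] at hsum
  have := Finset.sum_nonneg fun i (_ : i ∈ Finset.univ) => hwindow i
  linarith [sum_chord_le hL hc hk hkm]

end Cycles

theorem minMeanCycle_ge_of_short_cycles_nonneg_general {V : Type*}
    (ℓ : V → V → ℝ) (k : ℕ) (hk : 1 ≤ k)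
    (L : ℝ) (hL : IsGreatest {r : ℝ | ∃ a b : V, a ≠ b ∧ r = |ℓ a b|} L)
    (hnn : ∀ m : ℕ, 2 ≤ m → m ≤ k + 1 → ∀ c : Fin m → V, Function.Injective c →
      0 ≤ ∑ i : Fin m, ℓ (c i) (c (cnext i))) :
    ∀ m : ℕ, 2 ≤ m → ∀ c : Fin m → V, Function.Injective c →
      -(L / k) ≤ (∑ i : Fin m, ℓ (c i) (c (cnext i))) / m := by
  intro m hm c hc
  have : NeZero m := ⟨by omega⟩
  have hm0 : (0 : ℝ) < m := by exact_mod_cast (by omega : 0 < m)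
  have hk0 : (0 : ℝ) < k := by exact_mod_cast hk
  obtain ⟨a, b, -, hLab⟩ := hL.1
  have hL0 : 0 ≤ L := hLab ▸ abs_nonneg _
  change -(L / k) ≤ cycleLength ℓ c / m
  rcases le_or_gt m (k + 1) with hshort | hlong
  · calc -(L / k) ≤ 0 := neg_nonpos.2 (by positivity)
      _ ≤ cycleLength ℓ c / m := div_nonneg (hnn m hm hshort c hc) hm0.le
  · have hbound := neg_mul_le_mul_cycleLength
      (fun x y hxy => (le_abs_self _).trans (hL.2 ⟨x, y, hxy, rfl⟩)) hc hk (by omega)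
      fun i => hnn (k + 1) (by omega) le_rfl _ (cycleWindow_injective hc i hlong.le)
    rw [← neg_div, div_le_div_iff₀ hk0 hm0]
    linarith

/-- In a complete directed graph in which every cycle of cardinality at most
`k+1` has nonnegative length, every cycle has mean length at least `-ℓmax / k`, where
`ℓmax` is the maximum of `|ℓ e|` over all arcs `e`. -/
theorem minMeanCycle_ge_of_short_cycles_nonneg {V : Type*} [Fintype V]
    (ℓ : V → V → ℝ) (k : ℕ) (hk : 1 ≤ k)
    (hV : ∃ a b : V, a ≠ b)
    (L : ℝ) (hL : IsGreatest {r : ℝ | ∃ a b : V, a ≠ b ∧ r = |ℓ a b|} L)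
    (hnn : ∀ m : ℕ, 2 ≤ m → m ≤ k + 1 → ∀ c : Fin m → V, Function.Injective c →
      0 ≤ ∑ i : Fin m, ℓ (c i) (c (cnext i))) :
    ∀ m : ℕ, 2 ≤ m → ∀ c : Fin m → V, Function.Injective c →
      -(L / k) ≤ (∑ i : Fin m, ℓ (c i) (c (cnext i))) / m :=
  minMeanCycle_ge_of_short_cycles_nonneg_general ℓ k hk L hL hnn
end
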